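/- arXiv:1310.5013 — 2 statements merged into one kernel-verified Lean document; each statement's English description precedes it below -/
import Mathlib

section
/- For any integers r, s ≥ 0 and any real (or complex) x ≠ 1, the identity ∑_{k=0}^{r} C(r+s-k, s) (x/(x-1))^k = x^{r+s+1}/(x-1)^r + (1-x) ∑_{k=0}^{s} C(r+s-k, r) x^k holds, where C(n,k) denotes the binomial coefficient. -/
/-!
Put `a = 1`, `b = x - 1` and clear the denominator `(x - 1) ^ r`. The identity becomes the
homogeneous "problem of points" identity
`a ^ (s + 1) * ∑_{j ≤ r} C(s + j, j) b ^ j (a + b) ^ (r - j)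
  + b ^ (r + 1) * ∑_{i ≤ s} C(r + i, i) a ^ i (a + b) ^ (s - i) = (a + b) ^ (r + s + 1)`,
which holds in every commutative semiring. It is proved by induction on `r`: the case `r = 0` is
the geometric sum, and the step comes from peeling off the `k = 0` term of each sum together with
Pascal's rule.
-/
open Finset

/-- The homogenized degree-`s` truncation of `∑ j, C(r + j, j) t ^ j = (1 - t) ^ (-(r + 1))`,
written with `k = s - j`. -/
def negBinomTrunc {R : Type*} [CommSemiring R] (r s : ℕ) (x y : R) : R :=
  ∑ k ∈ range (s + 1), ((r + s - k).choose r : R) * x ^ k * y ^ (s - k)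

section
variable {R : Type*} [CommSemiring R]

theorem negBinomTrunc_zero_right (r : ℕ) (x y : R) : negBinomTrunc r 0 x y = 1 := by
  simp [negBinomTrunc]

theorem negBinomTrunc_zero_left (s : ℕ) (x y : R) :
    negBinomTrunc 0 s x y = ∑ k ∈ range (s + 1), x ^ k * y ^ (s - k) := by
  simp [negBinomTrunc]

theorem negBinomTrunc_succ_right (r s : ℕ) (x y : R) :
    negBinomTrunc r (s + 1) x y =
      ((r + s + 1).choose r : R) * y ^ (s + 1) + x * negBinomTrunc r s x y := by
  rw [negBinomTrunc, sum_range_succ', negBinomTrunc, mul_sum, add_comm]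
  congr 1
  · simp [add_assoc]
  · refine sum_congr rfl fun k _ => ?_
    rw [show r + (s + 1) - (k + 1) = r + s - k by omega, Nat.add_sub_add_right]
    ring

theorem mul_negBinomTrunc_succ_left_add (r s : ℕ) (a b : R) :
    b * negBinomTrunc (r + 1) s (a + b) a + ((r + s + 1).choose (r + 1) : R) * a ^ (s + 1) =
      (a + b) * negBinomTrunc r s (a + b) a := by
  induction s with
  | zero => simp [negBinomTrunc_zero_right, add_comm]
  | succ s ih =>
    have pascal : ((r + s + 2).choose (r + 1) : R) =
        ((r + s + 1).choose r : R) + ((r + s + 1).choose (r + 1) : R) := by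
      rw [← Nat.cast_add, ← Nat.choose_succ_succ']
    rw [negBinomTrunc_succ_right, negBinomTrunc_succ_right, ← ih,
      show r + 1 + s + 1 = r + s + 2 by omega, show r + (s + 1) + 1 = r + s + 2 by omega, pascal]
    ring

theorem add_pow_eq_negBinomTrunc (r s : ℕ) (a b : R) :
    a ^ (s + 1) * negBinomTrunc s r (a + b) b + b ^ (r + 1) * negBinomTrunc r s (a + b) a =
      (a + b) ^ (r + s + 1) := by
  induction r with
  | zero =>
    have geom := geom_sum₂_mul_add b a (s + 1)
    rw [add_comm b a, Nat.add_sub_cancel] at geom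
    rw [negBinomTrunc_zero_right, negBinomTrunc_zero_left, Nat.zero_add s, ← geom]
    ring
  | succ r ih =>
    have symm : ((s + r + 1).choose s : R) = ((r + s + 1).choose (r + 1) : R) := by
      rw [show s + r + 1 = s + (r + 1) by omega, Nat.choose_symm_add,
        show s + (r + 1) = r + s + 1 by omega]
    rw [negBinomTrunc_succ_right, symm]
    calc _ = b ^ (r + 1) * (b * negBinomTrunc (r + 1) s (a + b) a
              + ((r + s + 1).choose (r + 1) : R) * a ^ (s + 1))
            + (a + b) * (a ^ (s + 1) * negBinomTrunc s r (a + b) b) := by ring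
      _ = (a + b) * (a + b) ^ (r + s + 1) := by rw [mul_negBinomTrunc_succ_left_add, ← ih]; ring
      _ = _ := by rw [← pow_succ', show r + 1 + s + 1 = r + s + 1 + 1 by omega]

end

theorem negBinomTrunc_eq_pow_mul_sum_div {K : Type*} [Field K] (r s : ℕ) (x : K) {y : K}
    (hy : y ≠ 0) :
    negBinomTrunc r s x y =
      y ^ s * ∑ k ∈ range (s + 1), ((r + s - k).choose r : K) * (x / y) ^ k := by
  rw [negBinomTrunc, mul_sum]
  refine sum_congr rfl fun k hk => ?_
  rw [pow_sub₀ y hy (Nat.le_of_lt_succ (mem_range.mp hk)), div_pow]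
  field_simp

theorem stmt_0 (r s : ℕ) (x : ℂ) (hx : x ≠ 1) :
    ∑ k ∈ Finset.range (r + 1), ((r + s - k).choose s : ℂ) * (x / (x - 1)) ^ k =
      x ^ (r + s + 1) / (x - 1) ^ r +
        (1 - x) * ∑ k ∈ Finset.range (s + 1), ((r + s - k).choose r : ℂ) * x ^ k := by
  have hy : x - 1 ≠ 0 := sub_ne_zero.mpr hx
  have key := add_pow_eq_negBinomTrunc r s 1 (x - 1)
  rw [add_sub_cancel, one_pow, one_mul, negBinomTrunc_eq_pow_mul_sum_div _ _ _ hy, add_comm s r]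
    at key
  simp only [negBinomTrunc, one_pow, mul_one] at key
  field_simp
  linear_combination key
end

section
/- Let q be a complex number with |q| < 1 and let c ≠ 0. For any integers r, s ≥ 0, the identity ∑_{k=0}^{r} [r+s-k choose r-k]_q q^{(s+1)k} (c;q)_k = (1/c; q^{-1})_{1+s} (c q^{1+s}; q)_r + c^{-1} ∑_{k=0}^{s} [r+s-k choose s-k]_q (1/c; q^{-1})_k q^{-k} holds. -/
open Finset Complex

/-- finite q-Pochhammer symbol `(x; q)_n` -/
noncomputable def qp (q x : ℂ) (n : ℕ) : ℂ := ∏ j ∈ Finset.range n, (1 - x * q ^ j)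

/-- infinite q-Pochhammer symbol `(x; q)_∞` -/
noncomputable def qpi (q x : ℂ) : ℂ := ∏' j : ℕ, (1 - x * q ^ j)

/-- finite q-Pochhammer symbol with base `q⁻¹`: `(x; q⁻¹)_n` -/
noncomputable def qpinv (q x : ℂ) (n : ℕ) : ℂ := ∏ j ∈ Finset.range n, (1 - x * q⁻¹ ^ j)

/-- Gaussian (q-binomial) coefficient -/
noncomputable def qbinom (q : ℂ) (n k : ℕ) : ℂ := qp q q n / (qp q q k * qp q q (n - k))

/-!
Write `L(c, r, s)` and `M(c, r, s)` for the sums on the two sides. Splitting off the term `k = 0`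
and using `(c; q)_{k+1} = (1 - c) (cq; q)_k` gives
`L(c, r+1, s) = [r+1+s, r+1] + (1 - c) q^{s+1} L(cq, r, s)`, and the q-Pascal rule, by induction
on `s`, gives the companion recursion `M(c, r+1, s) = c [r+1+s, r+1] + (1 - c) q^s M(cq, r, s)`.
The identity then follows by induction on `r`; for `r = 0` it is the telescoping sum
`(x; p)_n + x ∑_{k<n} (x; p)_k p^k = 1` with `x = 1/c`, `p = 1/q`.
The case `q = 0` is separate, since there `q⁻¹ = 0`; both sums are then `1`.
-/

section Pochhammer

variable (q x : ℂ) (n : ℕ)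

@[simp] lemma qp_zero : qp q x 0 = 1 := prod_range_zero _

lemma qp_succ : qp q x (n + 1) = qp q x n * (1 - x * q ^ n) := prod_range_succ _ n

lemma qp_succ' : qp q x (n + 1) = (1 - x) * qp q (x * q) n := by
  rw [qp, prod_range_succ', mul_comm, qp]
  simp only [pow_zero, mul_one, pow_succ', mul_assoc]

lemma qpinv_eq_qp_inv : qpinv q x n = qp q⁻¹ x n := rfl

lemma qp_add_mul_sum_qp_mul_pow : qp q x n + x * ∑ k ∈ range n, qp q x k * q ^ k = 1 := by
  induction n with
  | zero => simp
  | succ n ih => rw [sum_range_succ, qp_succ]; linear_combination ih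

lemma qp_zero_base_succ : qp 0 x (n + 1) = 1 - x := by
  rw [qp_succ']; simp [qp]

lemma qp_self_ne_zero_of_norm_lt_one {q : ℂ} (hq : ‖q‖ < 1) (n : ℕ) : qp q q n ≠ 0 := by
  refine prod_ne_zero_iff.2 fun j _ h => ?_
  have : ‖q ^ (j + 1)‖ < 1 := by
    rw [norm_pow]; exact pow_lt_one₀ (norm_nonneg q) hq (by omega)
  rw [pow_succ', ← sub_eq_zero.1 h, norm_one] at this
  exact this.false

end Pochhammer

lemma qbinom_symm_add (q : ℂ) (a b : ℕ) : qbinom q (a + b) a = qbinom q (a + b) b := by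
  rw [qbinom, qbinom, Nat.add_sub_cancel_left, Nat.add_sub_cancel, mul_comm]

lemma qbinom_zero_base (n k : ℕ) : qbinom 0 n k = 1 := by
  simp [qbinom, qp]

section QBinomial

variable {q : ℂ} (hq : ∀ n, qp q q n ≠ 0)
include hq

lemma qbinom_zero_right (n : ℕ) : qbinom q n 0 = 1 := by
  simp [qbinom, hq]

lemma qbinom_self (n : ℕ) : qbinom q n n = 1 := by
  simp [qbinom, hq]

lemma qbinom_succ_succ (k t : ℕ) :
    qbinom q (k + t + 2) (k + 1) =
      qbinom q (k + t + 1) (k + 1) + q ^ (t + 1) * qbinom q (k + t + 1) k := by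
  have hqt := hq (t + 1)
  have hqk := hq (k + 1)
  rw [qp_succ] at hqt hqk
  rw [qbinom, qbinom, qbinom, show k + t + 2 - (k + 1) = t + 1 by omega,
    show k + t + 1 - (k + 1) = t by omega, show k + t + 1 - k = t + 1 by omega,
    show k + t + 2 = k + t + 1 + 1 by omega, qp_succ, qp_succ q q t, qp_succ q q k]
  field_simp [right_ne_zero_of_mul hqt, right_ne_zero_of_mul hqk]
  ring

end QBinomial

noncomputable def leftSum (q c : ℂ) (r s : ℕ) : ℂ :=
  ∑ k ∈ range (r + 1), qbinom q (r + s - k) (r - k) * q ^ ((s + 1) * k) * qp q c k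

noncomputable def rightSum (q c : ℂ) (r s : ℕ) : ℂ :=
  ∑ k ∈ range (s + 1), qbinom q (r + s - k) (s - k) * qp q⁻¹ c⁻¹ k * q⁻¹ ^ k

section Sums

variable {q : ℂ}

lemma leftSum_succ_left (c : ℂ) (r s : ℕ) :
    leftSum q c (r + 1) s =
      qbinom q (r + 1 + s) (r + 1) + (1 - c) * q ^ (s + 1) * leftSum q (c * q) r s := by
  rw [leftSum, sum_range_succ', leftSum, mul_sum, add_comm]
  congr 1
  · simp
  · refine sum_congr rfl fun k _ => ?_
    rw [qp_succ', show r + 1 + s - (k + 1) = r + s - k by omega,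
      show r + 1 - (k + 1) = r - k by omega, mul_add, mul_one, pow_add]
    ring

lemma rightSum_succ_right (c : ℂ) (r s : ℕ) :
    rightSum q c r (s + 1) =
      qbinom q (r + s + 1) (s + 1) + (1 - c⁻¹) * q⁻¹ * rightSum q (c * q) r s := by
  rw [rightSum, sum_range_succ', rightSum, mul_sum, add_comm]
  congr 1
  · simp [add_assoc]
  · refine sum_congr rfl fun k _ => ?_
    rw [qp_succ', show r + (s + 1) - (k + 1) = r + s - k by omega,
      show s + 1 - (k + 1) = s - k by omega, mul_inv, pow_succ]
    ring

lemma leftSum_zero_left (hq : ∀ n, qp q q n ≠ 0) (c : ℂ) (s : ℕ) : leftSum q c 0 s = 1 := by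
  simp [leftSum, qbinom_zero_right hq]

lemma rightSum_zero_left (hq : ∀ n, qp q q n ≠ 0) (c : ℂ) (s : ℕ) :
    rightSum q c 0 s = ∑ k ∈ range (s + 1), qp q⁻¹ c⁻¹ k * q⁻¹ ^ k := by
  refine sum_congr rfl fun k _ => ?_
  rw [zero_add, qbinom_self hq, one_mul]

lemma rightSum_zero_right (hq : ∀ n, qp q q n ≠ 0) (c : ℂ) (r : ℕ) : rightSum q c r 0 = 1 := by
  simp [rightSum, qbinom_zero_right hq]

lemma rightSum_succ_left (hq : ∀ n, qp q q n ≠ 0) (hq0 : q ≠ 0) {c : ℂ} (hc : c ≠ 0) (r s : ℕ) :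
    rightSum q c (r + 1) s =
      c * qbinom q (r + 1 + s) (r + 1) + (1 - c) * q ^ s * rightSum q (c * q) r s := by
  induction s generalizing c with
  | zero =>
    simp only [rightSum_zero_right hq, add_zero, qbinom_self hq]
    ring
  | succ s ih =>
    have hsymm₁ : qbinom q (r + 1 + s + 1) (s + 1) = qbinom q (r + 1 + (s + 1)) (r + 1) :=
      (qbinom_symm_add q (r + 1) (s + 1)).symm
    have hsymm₂ : qbinom q (r + s + 1) (s + 1) = qbinom q (r + s + 1) r :=
      (qbinom_symm_add q r (s + 1)).symm
    have hpascal : qbinom q (r + 1 + (s + 1)) (r + 1) =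
        qbinom q (r + 1 + s) (r + 1) + q ^ (s + 1) * qbinom q (r + s + 1) r := by
      rw [add_right_comm r 1 s, show r + 1 + (s + 1) = r + s + 2 by omega]
      exact qbinom_succ_succ hq r s
    rw [rightSum_succ_right, rightSum_succ_right, ih (mul_ne_zero hc hq0), hsymm₁, hsymm₂,
      hpascal]
    field_simp
    ring

end Sums

lemma one_sub_mul_pow_mul_qp_inv {q c : ℂ} (hq0 : q ≠ 0) (hc : c ≠ 0) (n : ℕ) :
    (1 - c) * q ^ n * qp q⁻¹ (c * q)⁻¹ n = (1 - c * q ^ n) * qp q⁻¹ c⁻¹ n := by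
  have hsucc := (qp_succ q⁻¹ c⁻¹ n).symm.trans (qp_succ' q⁻¹ c⁻¹ n)
  rw [← mul_inv] at hsucc
  have hcc : c * c⁻¹ = 1 := mul_inv_cancel₀ hc
  have hqq : q ^ n * q⁻¹ ^ n = 1 := by rw [← mul_pow, mul_inv_cancel₀ hq0, one_pow]
  linear_combination (c * q ^ n) * hsucc +
    (qp q⁻¹ c⁻¹ n * q ^ n * q⁻¹ ^ n - q ^ n * qp q⁻¹ (c * q)⁻¹ n) * hcc + qp q⁻¹ c⁻¹ n * hqq

lemma leftSum_eq_of_ne_zero {q : ℂ} (hq : ∀ n, qp q q n ≠ 0) (hq0 : q ≠ 0) {c : ℂ} (hc : c ≠ 0)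
    (r s : ℕ) :
    leftSum q c r s = qp q⁻¹ c⁻¹ (s + 1) * qp q (c * q ^ (s + 1)) r + c⁻¹ * rightSum q c r s := by
  induction r generalizing c with
  | zero =>
    rw [leftSum_zero_left hq, rightSum_zero_left hq, qp_zero, mul_one]
    exact (qp_add_mul_sum_qp_mul_pow q⁻¹ c⁻¹ (s + 1)).symm
  | succ r ih =>
    have hcq : c * q * q ^ (s + 1) = c * q ^ (s + 1) * q := by ring
    have hcc : c * c⁻¹ = 1 := mul_inv_cancel₀ hc
    have hqq : q * q⁻¹ = 1 := mul_inv_cancel₀ hq0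
    rw [leftSum_succ_left, ih (mul_ne_zero hc hq0), rightSum_succ_left hq hq0 hc, hcq, qp_succ' q]
    linear_combination qp q (c * q ^ (s + 1) * q) r * one_sub_mul_pow_mul_qp_inv hq0 hc (s + 1)
      + c⁻¹ * q ^ s * rightSum q (c * q) r s * (1 - c) * hqq - qbinom q (r + 1 + s) (r + 1) * hcc

lemma leftSum_zero_base (c : ℂ) (r s : ℕ) : leftSum 0 c r s = 1 := by
  simp [leftSum, sum_range_succ', qbinom_zero_base]

lemma rightSum_zero_base (c : ℂ) (r s : ℕ) : rightSum 0 c r s = 1 := by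
  simp [rightSum, sum_range_succ', qbinom_zero_base]

lemma leftSum_eq {q : ℂ} (hq : ∀ n, qp q q n ≠ 0) {c : ℂ} (hc : c ≠ 0) (r s : ℕ) :
    leftSum q c r s = qp q⁻¹ c⁻¹ (s + 1) * qp q (c * q ^ (s + 1)) r + c⁻¹ * rightSum q c r s := by
  rcases eq_or_ne q 0 with rfl | hq0
  · rw [leftSum_zero_base, rightSum_zero_base, inv_zero, qp_zero_base_succ]
    simp [qp]
  · exact leftSum_eq_of_ne_zero hq hq0 hc r s

theorem stmt_2 (q c : ℂ) (hq : ‖q‖ < 1) (hc : c ≠ 0) (r s : ℕ) :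
    ∑ k ∈ Finset.range (r + 1),
        qbinom q (r + s - k) (r - k) * q ^ ((s + 1) * k) * qp q c k =
      qpinv q c⁻¹ (1 + s) * qp q (c * q ^ (1 + s)) r +
        c⁻¹ * ∑ k ∈ Finset.range (s + 1),
          qbinom q (r + s - k) (s - k) * qpinv q c⁻¹ k * (q⁻¹) ^ k := by
  rw [add_comm 1 s]
  simp only [qpinv_eq_qp_inv]
  exact leftSum_eq (qp_self_ne_zero_of_norm_lt_one hq) hc r s
end
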